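/- arXiv:math/0512010 — 2 statements merged into one kernel-verified Lean document; each statement's English description precedes it below -/
import Mathlib

section
/- Fix an integer k ≥ 3 and a real r > 2^{k−1} ln 2. Let H₁ and H₂ be two independent random k-uniform hypergraphs, each distributed as H_k(n, ⌊rn⌋). Then the probability that H₁ and H₂ admit disjoint covers tends to 0 as n → ∞. -/
open Filter Finset

open scoped Classical

/-- Two hypergraphs (given by their edge sets) on the vertex set `{1,…,n}`
admit disjoint covers. -/
def DisjointCovers {n : ℕ} (H₁ H₂ : Finset (Finset (Fin n))) : Prop :=
  ∃ C₁ C₂ : Finset (Fin n), Disjoint C₁ C₂ ∧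
    (∀ e ∈ H₁, ∃ v ∈ e, v ∈ C₁) ∧ (∀ e ∈ H₂, ∃ v ∈ e, v ∈ C₂)

/-- The set of all `k`-uniform hypergraphs on `{1,…,n}` with exactly `m` edges;
the distribution `H_k(n,m)` is uniform on this set. -/
noncomputable def hypSpace (n k m : ℕ) : Finset (Finset (Finset (Fin n))) :=
  Finset.univ.filter (fun H => (∀ e ∈ H, e.card = k) ∧ H.card = m)

/-- The probability that two independent random `k`-uniform hypergraphs, each
distributed as `H_k(n,m)`, admit disjoint covers. -/
noncomputable def probDC (n k m : ℕ) : ℝ :=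
  (((hypSpace n k m ×ˢ hypSpace n k m).filter
      (fun p => DisjointCovers p.1 p.2)).card : ℝ) /
    ((hypSpace n k m ×ˢ hypSpace n k m).card : ℝ)


/-!
A first-moment bound. If `C₁, C₂` are disjoint covers of `H₁, H₂`, then `H₁` is covered by
`C := C₁` and `H₂` by its complement. When `#C = c`, a uniform `m`-edge hypergraph is covered
by `C` with probability at most `(1 - x)^m ≤ exp(-m x)`, where `x = C(n-c,k)/C(n,k)` is the
fraction of `k`-sets missing `C`; likewise for `Cᶜ` with `y = C(c,k)/C(n,k)`. Convexity of
`t ↦ t^k` gives `x + y ≥ 2 (1/2 - k/n)^k`, so a union bound over the `2^n` sets `C` bounds the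
probability by `exp(n (log 2 - 2 (m/n) (1/2 - k/n)^k))`. As `m/n → r`, the factor after `n`
tends to `log 2 - r 2^(1-k)`, which is negative exactly when `r > 2^(k-1) log 2`.
-/

namespace Nat

theorem descFactorial_mul_pow_le_pow_mul_descFactorial {a N : ℕ} (h : a ≤ N) :
    ∀ m : ℕ, a.descFactorial m * N ^ m ≤ a ^ m * N.descFactorial m
  | 0 => by simp
  | m + 1 => by
    have hstep : (a - m) * N ≤ a * (N - m) := calc
      (a - m) * N = a * N - m * N := Nat.sub_mul a m N
      _ ≤ a * N - a * m :=
        Nat.sub_le_sub_left (by rw [Nat.mul_comm]; exact Nat.mul_le_mul_left m h) _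
      _ = a * (N - m) := (Nat.mul_sub a N m).symm
    rw [descFactorial_succ, descFactorial_succ, pow_succ, pow_succ]
    calc (a - m) * a.descFactorial m * (N ^ m * N)
        = ((a - m) * N) * (a.descFactorial m * N ^ m) := by ring
      _ ≤ (a * (N - m)) * (a ^ m * N.descFactorial m) :=
        Nat.mul_le_mul hstep (descFactorial_mul_pow_le_pow_mul_descFactorial h m)
      _ = a ^ m * a * ((N - m) * N.descFactorial m) := by ring

theorem choose_mul_pow_le_pow_mul_choose {a N : ℕ} (h : a ≤ N) (m : ℕ) :
    a.choose m * N ^ m ≤ a ^ m * N.choose m := by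
  have := descFactorial_mul_pow_le_pow_mul_descFactorial h m
  rw [descFactorial_eq_factorial_mul_choose, descFactorial_eq_factorial_mul_choose] at this
  refine Nat.le_of_mul_le_mul_left ?_ m.factorial_pos
  calc m ! * (a.choose m * N ^ m) = m ! * a.choose m * N ^ m := by ring
    _ ≤ a ^ m * (m ! * N.choose m) := this
    _ = m ! * (a ^ m * N.choose m) := by ring

theorem choose_div_choose_le_div_pow {a N : ℕ} (h : a ≤ N) (m : ℕ) :
    (a.choose m : ℝ) / N.choose m ≤ ((a : ℝ) / N) ^ m := by
  rcases N.eq_zero_or_pos with rfl | hN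
  · obtain rfl : a = 0 := Nat.le_zero.1 h
    cases m <;> simp
  refine div_le_of_le_mul₀ (by positivity) (by positivity) ?_
  rw [div_pow, div_mul_eq_mul_div, le_div_iff₀ (by positivity)]
  exact_mod_cast choose_mul_pow_le_pow_mul_choose h m

end Nat

theorem two_mul_half_sub_div_pow_le_choose_add_choose_div {n k c : ℕ} (hc : c ≤ n)
    (hkn : 2 * k ≤ n) :
    2 * (1 / 2 - (k : ℝ) / n) ^ k ≤ ((c.choose k : ℝ) + (n - c).choose k) / n.choose k := by
  rcases n.eq_zero_or_pos with rfl | hn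
  · obtain rfl : k = 0 := by omega
    norm_num
  set a : ℝ := ((c + 1 - k : ℕ) : ℝ)
  set b : ℝ := ((n - c + 1 - k : ℕ) : ℝ)
  have hab : (n : ℝ) - 2 * k ≤ a + b := by
    have : ((n : ℕ) : ℝ) ≤ (((c + 1 - k) + (n - c + 1 - k) + 2 * k : ℕ) : ℝ) := by
      exact_mod_cast (by omega : n ≤ (c + 1 - k) + (n - c + 1 - k) + 2 * k)
    push_cast at this
    linarith
  have hmid : 2 * (((n : ℝ) - 2 * k) / 2) ^ k ≤ a ^ k + b ^ k := by
    have hconv := (convexOn_pow k).2 (Set.mem_Ici.2 (Nat.cast_nonneg' _))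
      (Set.mem_Ici.2 (Nat.cast_nonneg' _)) (by norm_num : (0 : ℝ) ≤ 1 / 2)
      (by norm_num : (0 : ℝ) ≤ 1 / 2) (by norm_num) (x := a) (y := b)
    simp only [smul_eq_mul] at hconv
    have hle : (((n : ℝ) - 2 * k) / 2) ^ k ≤ (1 / 2 * a + 1 / 2 * b) ^ k :=
      pow_le_pow_left₀ (div_nonneg (sub_nonneg.2 (by exact_mod_cast hkn)) zero_le_two)
        (by linarith) k
    linarith
  have hchoose : (a ^ k + b ^ k) / k.factorial ≤ (c.choose k : ℝ) + (n - c).choose k := by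
    have hb : b ^ k / k.factorial ≤ ((n - c).choose k : ℝ) := Nat.pow_le_choose k (n - c)
    rw [add_div]
    exact add_le_add (Nat.pow_le_choose k c) hb
  have hpos : (0 : ℝ) < n.choose k := by exact_mod_cast Nat.choose_pos (by omega)
  calc 2 * (1 / 2 - (k : ℝ) / n) ^ k = 2 * (((n : ℝ) - 2 * k) / 2) ^ k / n ^ k := by
        rw [mul_div_assoc, ← div_pow]
        field_simp
    _ ≤ (a ^ k + b ^ k) / n ^ k := by gcongr
    _ = (a ^ k + b ^ k) / k.factorial / (n ^ k / k.factorial) := by field_simp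
    _ ≤ ((c.choose k : ℝ) + (n - c).choose k) / n.choose k :=
        div_le_div₀ (by positivity) hchoose hpos (Nat.choose_le_pow_div k n)

noncomputable def meetingEdges (n k : ℕ) (C : Finset (Fin n)) : Finset (Finset (Fin n)) :=
  (univ.powersetCard k).filter fun e => ∃ v ∈ e, v ∈ C

noncomputable def coveredBy (n k m : ℕ) (C : Finset (Fin n)) : Finset (Finset (Finset (Fin n))) :=
  (hypSpace n k m).filter fun H => ∀ e ∈ H, ∃ v ∈ e, v ∈ C

theorem card_meetingEdges (n k : ℕ) (C : Finset (Fin n)) :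
    #(meetingEdges n k C) = n.choose k - (n - #C).choose k := by
  have hmiss :
      (univ.powersetCard k).filter (fun e => ¬∃ v ∈ e, v ∈ C) = Cᶜ.powersetCard k := by
    ext e
    simp only [mem_filter, mem_powersetCard, subset_iff, mem_compl]
    grind
  have hsplit := card_filter_add_card_filter_not (s := univ.powersetCard k)
    (fun e => ∃ v ∈ e, v ∈ C)
  rw [hmiss, card_powersetCard, card_powersetCard, card_compl, card_univ, Fintype.card_fin]
    at hsplit
  exact Nat.eq_sub_of_add_eq hsplit

theorem coveredBy_eq_powersetCard (n k m : ℕ) (C : Finset (Fin n)) :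
    coveredBy n k m C = (meetingEdges n k C).powersetCard m := by
  ext H
  simp only [coveredBy, hypSpace, meetingEdges, mem_filter, mem_univ, true_and, mem_powersetCard,
    subset_iff]
  aesop

theorem card_hypSpace (n k m : ℕ) : #(hypSpace n k m) = (n.choose k).choose m := by
  have : hypSpace n k m = (univ.powersetCard k).powersetCard m := by
    ext H
    simp [hypSpace, subset_iff]
  simp [this]

theorem card_coveredBy (n k m : ℕ) (C : Finset (Fin n)) :
    #(coveredBy n k m C) = (n.choose k - (n - #C).choose k).choose m := by
  rw [coveredBy_eq_powersetCard, card_powersetCard, card_meetingEdges]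

theorem card_filter_disjointCovers_le (n k m : ℕ) :
    #((hypSpace n k m ×ˢ hypSpace n k m).filter fun p => DisjointCovers p.1 p.2)
      ≤ ∑ C : Finset (Fin n), #(coveredBy n k m C) * #(coveredBy n k m Cᶜ) := by
  calc _ ≤ #(univ.biUnion fun C => coveredBy n k m C ×ˢ coveredBy n k m Cᶜ) := by
        refine card_le_card fun p hp => ?_
        obtain ⟨hmem, C₁, C₂, hdisj, h₁, h₂⟩ := mem_filter.1 hp
        refine mem_biUnion.2 ⟨C₁, mem_univ _, mem_product.2 ⟨?_, ?_⟩⟩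
        · exact mem_filter.2 ⟨(mem_product.1 hmem).1, h₁⟩
        · refine mem_filter.2 ⟨(mem_product.1 hmem).2, fun e he => ?_⟩
          obtain ⟨v, hv, hvC₂⟩ := h₂ e he
          exact ⟨v, hv, mem_compl.2 (disjoint_right.1 hdisj hvC₂)⟩
    _ ≤ _ := card_biUnion_le.trans_eq (by simp [card_product])

theorem card_coveredBy_div_card_hypSpace_le (n k m : ℕ) (C : Finset (Fin n)) :
    (#(coveredBy n k m C) : ℝ) / #(hypSpace n k m)
      ≤ Real.exp (-(m * ((n - #C).choose k / n.choose k : ℝ))) := by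
  set N := n.choose k
  set t := (n - #C).choose k
  have htN : t ≤ N := Nat.choose_le_choose k (Nat.sub_le n _)
  have hx : (t : ℝ) / N ≤ 1 := div_le_one_of_le₀ (by exact_mod_cast htN) (Nat.cast_nonneg _)
  rw [card_coveredBy, card_hypSpace, neg_mul_eq_mul_neg, Real.exp_nat_mul]
  calc ((N - t).choose m : ℝ) / N.choose m ≤ (((N - t : ℕ) : ℝ) / N) ^ m :=
        Nat.choose_div_choose_le_div_pow (Nat.sub_le N t) m
    _ ≤ (1 - t / N) ^ m := by
        gcongr
        rw [Nat.cast_sub htN, sub_div]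
        exact sub_le_sub_right (div_self_le_one _) _
    _ ≤ Real.exp (-(t / N)) ^ m :=
        pow_le_pow_left₀ (sub_nonneg.2 hx) (Real.one_sub_le_exp_neg _) m

theorem probDC_le_two_pow_mul_exp {n k : ℕ} (m : ℕ) {β : ℝ}
    (hβ : ∀ c ≤ n, 2 * β ≤ ((c.choose k : ℝ) + (n - c).choose k) / n.choose k) :
    probDC n k m ≤ 2 ^ n * Real.exp (-(2 * m * β)) := by
  have hcount : probDC n k m ≤ ∑ C : Finset (Fin n), (#(coveredBy n k m C) : ℝ) /
      #(hypSpace n k m) * (#(coveredBy n k m Cᶜ) / #(hypSpace n k m)) := by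
    simp_rw [probDC, card_product, Nat.cast_mul, div_mul_div_comm, ← sum_div]
    refine div_le_div_of_nonneg_right ?_ (by positivity)
    exact_mod_cast card_filter_disjointCovers_le n k m
  calc probDC n k m ≤ _ := hcount
    _ ≤ ∑ _C : Finset (Fin n), Real.exp (-(2 * m * β)) := sum_le_sum fun C _ => ?_
    _ = 2 ^ n * Real.exp (-(2 * m * β)) := by simp
  have hcompl : n - #Cᶜ = #C := by
    rw [card_compl, Fintype.card_fin, Nat.sub_sub_self (by simpa using C.card_le_univ)]
  refine (mul_le_mul (card_coveredBy_div_card_hypSpace_le n k m C)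
    (card_coveredBy_div_card_hypSpace_le n k m Cᶜ) (by positivity) (by positivity)).trans ?_
  have hsum := mul_le_mul_of_nonneg_left (hβ #C (by simpa using C.card_le_univ)) m.cast_nonneg
  rw [add_div] at hsum
  rw [← Real.exp_add, hcompl, Real.exp_le_exp]
  linarith

theorem probDC_le_exp {n k : ℕ} (m : ℕ) (hkn : 2 * k ≤ n) (hn : 0 < n) :
    probDC n k m ≤ Real.exp (n * (Real.log 2 - 2 * (m / n) * (1 / 2 - (k : ℝ) / n) ^ k)) := by
  calc probDC n k m ≤ 2 ^ n * Real.exp (-(2 * m * (1 / 2 - (k : ℝ) / n) ^ k)) :=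
        probDC_le_two_pow_mul_exp m fun c hc =>
          two_mul_half_sub_div_pow_le_choose_add_choose_div hc hkn
    _ = _ := by
        rw [mul_sub, Real.exp_sub, ← Real.exp_log (two_pos (α := ℝ)), ← Real.exp_nat_mul,
          Real.exp_log two_pos, Real.exp_neg, div_eq_mul_inv]
        field_simp

theorem no_disjoint_covers_above_threshold_general (k : ℕ) (r : ℝ)
    (hr : (2 : ℝ) ^ (k - 1) * Real.log 2 < r) :
    Tendsto (fun n => probDC n k ⌊r * n⌋₊) atTop (nhds 0) := by
  have hr0 : 0 < r := lt_of_le_of_lt (by positivity) hr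
  have hneg : Real.log 2 - 2 * r * (1 / 2) ^ k < 0 := by
    have h2k : (2 : ℝ) ^ k ≤ 2 ^ (k - 1) * 2 :=
      (pow_le_pow_right₀ one_le_two (by omega : k ≤ k - 1 + 1)).trans_eq (pow_succ _ _)
    have : Real.log 2 * 2 ^ k < 2 * r := by nlinarith [Real.log_pos one_lt_two]
    rwa [one_div_pow, sub_neg, ← div_eq_mul_one_div, lt_div_iff₀ (by positivity)]
  have hexponent : Tendsto
      (fun n : ℕ => Real.log 2 - 2 * (⌊r * n⌋₊ / n) * (1 / 2 - (k : ℝ) / n) ^ k)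
      atTop (nhds (Real.log 2 - 2 * r * (1 / 2) ^ k)) := by
    have hm := (tendsto_nat_floor_mul_div_atTop hr0.le).comp tendsto_natCast_atTop_atTop
    have hk := tendsto_const_div_atTop_nhds_zero_nat (k : ℝ)
    have h := (tendsto_const_nhds (x := Real.log 2)).sub
      (((tendsto_const_nhds (x := (2 : ℝ))).mul hm).mul
        (((tendsto_const_nhds (x := (1 / 2 : ℝ))).sub hk).pow k))
    rwa [sub_zero] at h
  refine squeeze_zero' (Eventually.of_forall fun n => by unfold probDC; positivity)
    (eventually_atTop.2 ⟨2 * k + 1, fun n hn => probDC_le_exp _ (by omega) (by omega)⟩)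
    (Real.tendsto_exp_atBot.comp (tendsto_natCast_atTop_atTop.atTop_mul_neg hneg hexponent))

/-- For `k ≥ 3` and `r > 2^(k−1) ln 2`, two independent random `k`-uniform
hypergraphs distributed as `H_k(n, ⌊rn⌋)` admit disjoint covers with
probability tending to `0`. -/
theorem no_disjoint_covers_above_threshold (k : ℕ) (hk : 3 ≤ k) (r : ℝ)
    (hr : (2 : ℝ) ^ (k - 1) * Real.log 2 < r) :
    Tendsto (fun n => probDC n k ⌊r * n⌋₊) atTop (nhds 0) :=
  no_disjoint_covers_above_threshold_general k r hr
end

section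
/- Fix a real c with 0 < c < 1, and let G₁ and G₂ be two independent random graphs on vertex set {1,…,n}, each distributed as G(n, p) with p = c/n; colour the edges of G₁ red and the edges of G₂ blue. Then for all sufficiently large n, the probability that G = G₁ ∪ G₂ contains no alternating cycle (even or odd, of any length) is at least e^{−4/(1−c)}; in particular, with probability at least e^{−4/(1−c)} > 0 the graphs G₁ and G₂ admit disjoint covers. -/
open Filter Finset

open scoped Classical

/-- All possible edges of a `k`-uniform hypergraph on `{1,…,n}`. -/
noncomputable def allEdges (n k : ℕ) : Finset (Finset (Fin n)) :=
  Finset.univ.filter (fun e => e.card = k)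

/-- The probability, under two independent copies of the binomial random
`k`-uniform hypergraph `H_k(n,p)` (each possible edge present independently
with probability `p`), that the pair `(H₁, H₂)` satisfies `P`. -/
noncomputable def probPair (n k : ℕ) (p : ℝ)
    (P : Finset (Finset (Fin n)) → Finset (Finset (Fin n)) → Prop) : ℝ :=
  ∑ H₁ ∈ (allEdges n k).powerset, ∑ H₂ ∈ (allEdges n k).powerset,
    if P H₁ H₂ then
      (p ^ H₁.card * (1 - p) ^ ((allEdges n k).card - H₁.card)) *
        (p ^ H₂.card * (1 - p) ^ ((allEdges n k).card - H₂.card))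
    else 0

/-- The colour of the `i`-th edge of an alternating sequence whose first edge
has colour `b` (`true` = red, `false` = blue). -/
def altColour (b : Bool) (i : ℕ) : Bool := if Even i then b else !b

/-- `v 0, v 1, …, v (m-1)` is an alternating cycle of length `m` in the
coloured graph whose red edges are `H₁` and blue edges are `H₂`, the first
edge `{v 0, v 1}` having colour `b`: the vertices are distinct and the colours
of consecutive edges alternate around the cycle.  For even `m` this is an even
alternating cycle; for odd `m` the two edges at `v 0` both get colour `b`
(an odd alternating cycle, with the roles of red and blue possibly swapped). -/
def IsAltCycle {n : ℕ} (H₁ H₂ : Finset (Finset (Fin n))) (b : Bool) (m : ℕ)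
    (v : ℕ → Fin n) : Prop :=
  (∀ i < m, ∀ j < m, v i = v j → i = j) ∧
  ∀ i < m, ({v i, v ((i + 1) % m)} : Finset (Fin n)) ∈
    (if altColour b i then H₁ else H₂)

/-- The coloured graph `H₁ ∪ H₂` contains an alternating cycle (even or odd,
of any length). -/
def HasAltCycle {n : ℕ} (H₁ H₂ : Finset (Finset (Fin n))) : Prop :=
  ∃ (b : Bool) (m : ℕ) (v : ℕ → Fin n), 2 ≤ m ∧ IsAltCycle H₁ H₂ b m v

/-!
Regard the red and the blue graph together as one binomial random subset `X` of two disjoint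
copies of the possible edges. A potential alternating cycle of length `m` is then a fixed set of
`m` coloured edges, contained in `X` with probability `p ^ m`, and "no alternating cycle" is a
decreasing event. By Harris's inequality its probability is at least
`∏ (1 - p ^ m) ≥ exp (-2 ∑ p ^ m)`, and since there are at most `2 n ^ m` potential cycles of
length `m`, `∑ p ^ m ≤ 2 ∑ c ^ m ≤ 2 / (1 - c)`.

Without alternating cycles, disjoint covers are built greedily: a vertex lying on red edges only
joins the red cover, and symmetrically. If every vertex on an edge sees both colours, a walk
along edges of alternating colours closes an alternating cycle at its first repeated vertex.
-/

section BinomialRandomSubset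

variable {α β ι : Type*} {U : Finset α} {p : ℝ}

noncomputable def binomialWeight (U : Finset α) (p : ℝ) (X : Finset α) : ℝ :=
  p ^ #X * (1 - p) ^ (#U - #X)

/-- The expectation of `f X` for the random subset `X ⊆ U` containing each element independently
with probability `p`. -/
noncomputable def binomialExpect (U : Finset α) (p : ℝ) (f : Finset α → ℝ) : ℝ :=
  ∑ X ∈ U.powerset, binomialWeight U p X * f X

lemma binomialWeight_nonneg (hp0 : 0 ≤ p) (hp1 : p ≤ 1) (X : Finset α) :
    0 ≤ binomialWeight U p X :=
  mul_nonneg (pow_nonneg hp0 _) (pow_nonneg (sub_nonneg.2 hp1) _)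

lemma binomialWeight_mul_eq_inter_mul_union [DecidableEq α] {s t : Finset α} (hs : s ⊆ U)
    (ht : t ⊆ U) :
    binomialWeight U p s * binomialWeight U p t =
      binomialWeight U p (s ∩ t) * binomialWeight U p (s ∪ t) := by
  have hcard := card_union_add_card_inter s t
  have hs' := card_le_card hs
  have ht' := card_le_card ht
  have hst := card_le_card (union_subset hs ht)
  have hi := card_le_card ((inter_subset_left (s₂ := t)).trans hs)
  calc binomialWeight U p s * binomialWeight U p t
      = p ^ (#s + #t) * (1 - p) ^ ((#U - #s) + (#U - #t)) := by
        simp only [binomialWeight]; ring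
    _ = p ^ (#(s ∩ t) + #(s ∪ t)) * (1 - p) ^ ((#U - #(s ∩ t)) + (#U - #(s ∪ t))) := by
        congr 2 <;> omega
    _ = _ := by simp only [binomialWeight]; ring

lemma binomialWeight_disjSum {A : Finset α} {B : Finset β} {S : Finset α} {T : Finset β}
    (hS : S ⊆ A) (hT : T ⊆ B) :
    binomialWeight (A.disjSum B) p (S.disjSum T) = binomialWeight A p S * binomialWeight B p T := by
  have hS' := card_le_card hS
  have hT' := card_le_card hT
  simp only [binomialWeight, card_disjSum]
  rw [show #A + #B - (#S + #T) = (#A - #S) + (#B - #T) by omega]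
  ring

lemma sum_binomialWeight (U : Finset α) (p : ℝ) : ∑ X ∈ U.powerset, binomialWeight U p X = 1 := by
  simp [binomialWeight, sum_pow_mul_eq_add_pow]

lemma binomialExpect_const_one (U : Finset α) (p : ℝ) : binomialExpect U p (fun _ ↦ 1) = 1 := by
  simp [binomialExpect, sum_binomialWeight]

lemma binomialExpect_nonneg (hp0 : 0 ≤ p) (hp1 : p ≤ 1) {f : Finset α → ℝ} (hf : 0 ≤ f) :
    0 ≤ binomialExpect U p f :=
  sum_nonneg fun X _ ↦ mul_nonneg (binomialWeight_nonneg hp0 hp1 X) (hf X)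

lemma binomialExpect_mono (hp0 : 0 ≤ p) (hp1 : p ≤ 1) {f g : Finset α → ℝ}
    (h : ∀ X ⊆ U, f X ≤ g X) : binomialExpect U p f ≤ binomialExpect U p g :=
  sum_le_sum fun X hX ↦
    mul_le_mul_of_nonneg_left (h X (mem_powerset.1 hX)) (binomialWeight_nonneg hp0 hp1 X)

lemma binomialExpect_one_sub (U : Finset α) (p : ℝ) (f : Finset α → ℝ) :
    binomialExpect U p (fun X ↦ 1 - f X) = 1 - binomialExpect U p f := by
  simp only [binomialExpect, mul_sub, mul_one, sum_sub_distrib, sum_binomialWeight]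

lemma binomialExpect_disjSum (A : Finset α) (B : Finset β) (p : ℝ)
    (f : Finset (α ⊕ β) → ℝ) :
    binomialExpect (A.disjSum B) p f =
      binomialExpect A p (fun S ↦ binomialExpect B p (fun T ↦ f (S.disjSum T))) := by
  simp only [binomialExpect, mul_sum, ← sum_product']
  refine sum_nbij' (fun X ↦ (X.toLeft, X.toRight)) (fun ST ↦ ST.1.disjSum ST.2) ?_ ?_ ?_ ?_ ?_
  · intro X hX
    simpa [subset_disjSum] using hX
  · intro ST hST
    simp only [mem_product, mem_powerset] at hST ⊢
    exact disjSum_mono hST.1 hST.2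
  · intro X _
    exact toLeft_disjSum_toRight
  · intro ST _
    simp
  · intro X hX
    obtain ⟨hL, hR⟩ := subset_disjSum.1 (mem_powerset.1 hX)
    dsimp only
    rw [← mul_assoc, ← binomialWeight_disjSum hL hR, toLeft_disjSum_toRight]

lemma binomialExpect_ite_subset {S : Finset α} (hS : S ⊆ U) :
    binomialExpect U p (fun X ↦ if S ⊆ X then 1 else 0) = p ^ #S := by
  classical
  -- expand `∏ i ∈ U, (p + q i)` where `q` vanishes on `S` and is `1 - p` off `S`
  calc binomialExpect U p (fun X ↦ if S ⊆ X then 1 else 0)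
      = ∑ X ∈ U.powerset, (∏ _i ∈ X, p) * ∏ i ∈ U \ X, if i ∉ S then 1 - p else 0 := by
        refine sum_congr rfl fun X hX ↦ ?_
        have hXU := mem_powerset.1 hX
        have hSX : (∀ i ∈ U \ X, i ∉ S) ↔ S ⊆ X :=
          ⟨fun h i hi ↦ by_contra fun hiX ↦ h i (mem_sdiff.2 ⟨hS hi, hiX⟩) hi,
            fun h i hi hiS ↦ (mem_sdiff.1 hi).2 (h hiS)⟩
        simp only [prod_ite_zero, hSX, prod_const, card_sdiff_of_subset hXU, binomialWeight]
        split_ifs <;> ring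
    _ = ∏ i ∈ U, (p + if i ∉ S then 1 - p else 0) := (prod_add _ _ U).symm
    _ = p ^ #S := by
        rw [prod_congr rfl fun i _ ↦ show (p + if i ∉ S then 1 - p else 0) = if i ∈ S then p else 1
          by split_ifs <;> ring, prod_ite_mem, inter_eq_right.2 hS, prod_const]

/-- **Harris's inequality**. -/
theorem binomialExpect_mul_le (hp0 : 0 ≤ p) (hp1 : p ≤ 1) {f g : Finset α → ℝ} (hf₀ : 0 ≤ f)
    (hg₀ : 0 ≤ g) (hf : Antitone f) (hg : Antitone g) :
    binomialExpect U p f * binomialExpect U p g ≤ binomialExpect U p (f * g) := by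
  classical
  have hw := binomialWeight_nonneg (U := U) hp0 hp1
  have key := U.four_functions_theorem (f₁ := fun X ↦ binomialWeight U p X * f X)
    (f₂ := fun X ↦ binomialWeight U p X * g X)
    (f₃ := fun X ↦ binomialWeight U p X * (f X * g X)) (f₄ := binomialWeight U p)
    (fun X ↦ mul_nonneg (hw X) (hf₀ X)) (fun X ↦ mul_nonneg (hw X) (hg₀ X))
    (fun X ↦ mul_nonneg (hw X) (mul_nonneg (hf₀ X) (hg₀ X))) hw ?_ subset_rfl subset_rfl
  · simpa [powerset_infs_powerset_self, powerset_sups_powerset_self, sum_binomialWeight,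
      binomialExpect] using key
  intro s hs t ht
  calc binomialWeight U p s * f s * (binomialWeight U p t * g t)
      = binomialWeight U p (s ∩ t) * binomialWeight U p (s ∪ t) * (f s * g t) := by
        rw [← binomialWeight_mul_eq_inter_mul_union hs ht]; ring
    _ ≤ binomialWeight U p (s ∩ t) * binomialWeight U p (s ∪ t) * (f (s ∩ t) * g (s ∩ t)) := by
        refine mul_le_mul_of_nonneg_left ?_ (mul_nonneg (hw _) (hw _))
        exact mul_le_mul (hf inter_subset_left) (hg inter_subset_right) (hg₀ _) (hf₀ _)
    _ = _ := by ring

theorem prod_binomialExpect_le (hp0 : 0 ≤ p) (hp1 : p ≤ 1) (I : Finset ι)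
    {f : ι → Finset α → ℝ} (hf₀ : ∀ i ∈ I, 0 ≤ f i) (hf : ∀ i ∈ I, Antitone (f i)) :
    ∏ i ∈ I, binomialExpect U p (f i) ≤ binomialExpect U p (fun X ↦ ∏ i ∈ I, f i X) := by
  classical
  induction I using Finset.induction with
  | empty => simp [binomialExpect_const_one]
  | insert j I hj ih =>
    simp only [mem_insert, forall_eq_or_imp] at hf₀ hf
    have hprod₀ : 0 ≤ fun X ↦ ∏ i ∈ I, f i X := fun X ↦ prod_nonneg fun i hi ↦ hf₀.2 i hi X
    have hprod : Antitone fun X ↦ ∏ i ∈ I, f i X := fun X Y hXY ↦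
      prod_le_prod (fun i hi ↦ hf₀.2 i hi Y) fun i hi ↦ hf.2 i hi hXY
    calc ∏ i ∈ insert j I, binomialExpect U p (f i)
        = binomialExpect U p (f j) * ∏ i ∈ I, binomialExpect U p (f i) := prod_insert hj
      _ ≤ binomialExpect U p (f j) * binomialExpect U p (fun X ↦ ∏ i ∈ I, f i X) :=
          mul_le_mul_of_nonneg_left (ih hf₀.2 hf.2) (binomialExpect_nonneg hp0 hp1 hf₀.1)
      _ ≤ binomialExpect U p (f j * fun X ↦ ∏ i ∈ I, f i X) :=
          binomialExpect_mul_le hp0 hp1 hf₀.1 hprod₀ hf.1 hprod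
      _ = binomialExpect U p (fun X ↦ ∏ i ∈ insert j I, f i X) := by
          simp only [prod_insert hj]; rfl

theorem prod_one_sub_pow_card_le_binomialExpect (hp0 : 0 ≤ p) (hp1 : p ≤ 1) (I : Finset ι)
    {S : ι → Finset α} (hS : ∀ i ∈ I, S i ⊆ U) :
    ∏ i ∈ I, (1 - p ^ #(S i)) ≤
      binomialExpect U p (fun X ↦ if ∀ i ∈ I, ¬ S i ⊆ X then 1 else 0) := by
  have hnot : ∀ i ∈ I, binomialExpect U p (fun X ↦ if ¬ S i ⊆ X then 1 else 0) = 1 - p ^ #(S i) := by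
    intro i hi
    simp only [ite_not, ← binomialExpect_ite_subset (hS i hi), ← binomialExpect_one_sub]
    congr! 2; split_ifs <;> norm_num
  rw [← prod_congr rfl hnot]
  refine (prod_binomialExpect_le hp0 hp1 I (fun i _ X ↦ by positivity) fun i _ X Y hXY ↦ ?_).trans_eq
    (by simp only [prod_boole])
  by_cases hY : S i ⊆ Y
  · split_ifs <;> norm_num
  · have hX : ¬ S i ⊆ X := fun hX ↦ hY (hX.trans hXY)
    simp [hX, hY]

end BinomialRandomSubset

lemma mem_allEdges {n k : ℕ} {e : Finset (Fin n)} : e ∈ allEdges n k ↔ #e = k := by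
  simp [allEdges]

section AlternatingCycles

variable {n : ℕ} {H₁ H₂ : Finset (Finset (Fin n))}

lemma altColour_succ (b : Bool) (i : ℕ) : altColour b (i + 1) = !altColour b i := by
  by_cases hi : Even i <;> simp [altColour, hi, Nat.even_add_one]

lemma altColour_altColour (b : Bool) (i k : ℕ) :
    altColour (altColour b i) k = altColour b (i + k) := by
  by_cases hi : Even i <;> by_cases hk : Even k <;> simp [altColour, hi, hk, Nat.even_add]

lemma HasAltCycle.mono {H₁' H₂' : Finset (Finset (Fin n))} (h₁ : H₁ ⊆ H₁') (h₂ : H₂ ⊆ H₂') :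
    HasAltCycle H₁ H₂ → HasAltCycle H₁' H₂' := by
  rintro ⟨b, m, v, hm, hinj, hedge⟩
  refine ⟨b, m, v, hm, hinj, fun i hi ↦ ?_⟩
  have := hedge i hi
  cases hc : altColour b i <;> simp only [hc, Bool.false_eq_true, if_true, if_false] at this ⊢
  exacts [h₂ this, h₁ this]

theorem exists_lt_map_eq_and_injOn_Iio {β : Type*} [Finite β] (f : ℕ → β) :
    ∃ i j, i < j ∧ f i = f j ∧ Set.InjOn f (Set.Iio j) := by
  have h : ∃ j, ∃ i < j, f i = f j := by
    obtain ⟨i, j, hne, he⟩ := Finite.exists_ne_map_eq_of_infinite f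
    rcases hne.lt_or_gt with h | h
    exacts [⟨j, i, h, he⟩, ⟨i, j, h, he.symm⟩]
  obtain ⟨i, hi, he⟩ := Nat.find_spec h
  refine ⟨i, Nat.find h, hi, he, fun k hk l hl hkl ↦ ?_⟩
  by_contra hne
  rcases lt_or_gt_of_ne hne with h' | h'
  · exact Nat.find_min h hl ⟨k, h', hkl⟩
  · exact Nat.find_min h hk ⟨l, h', hkl.symm⟩

lemma hasAltCycle_of_walk (x : ℕ → Fin n)
    (hx : ∀ k, x (k + 1) ≠ x k ∧
      ({x k, x (k + 1)} : Finset (Fin n)) ∈ if altColour true k then H₁ else H₂) :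
    HasAltCycle H₁ H₂ := by
  obtain ⟨i, j, hij, hxij, hinj⟩ := exists_lt_map_eq_and_injOn_Iio x
  have hj : i + 1 < j := by
    rcases (show i + 1 ≤ j from hij).lt_or_eq with h | rfl
    · exact h
    · exact absurd hxij.symm (hx i).1
  refine ⟨altColour true i, j - i, fun k ↦ x (i + k), by omega, fun k hk l hl hkl ↦ ?_,
    fun k hk ↦ ?_⟩
  · have := hinj (show i + k < j by omega) (show i + l < j by omega) hkl
    omega
  · have hwrap : x (i + (k + 1) % (j - i)) = x (i + k + 1) := by
      rcases (show k + 1 ≤ j - i by omega).lt_or_eq with h | h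
      · rw [Nat.mod_eq_of_lt h, add_assoc]
      · rw [h, Nat.mod_self, add_zero, hxij]
        congr 1
        omega
    show {x (i + k), x (i + (k + 1) % (j - i))} ∈ _
    rw [altColour_altColour, hwrap]
    exact (hx (i + k)).2

lemma hasAltCycle_of_no_monochromatic_vertex (h₁ : ∀ e ∈ H₁, #e = 2) (h₂ : ∀ e ∈ H₂, #e = 2)
    (hred : ∀ v, (∃ e ∈ H₁, v ∈ e) → ∃ e ∈ H₂, v ∈ e)
    (hblue : ∀ v, (∃ e ∈ H₂, v ∈ e) → ∃ e ∈ H₁, v ∈ e) (hne : H₁.Nonempty) :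
    HasAltCycle H₁ H₂ := by
  let col : Bool → Finset (Finset (Fin n)) := fun c ↦ if c then H₁ else H₂
  have hcol : ∀ c, ∀ e ∈ col c, #e = 2 := by
    rintro (_ | _)
    exacts [h₂, h₁]
  have hswitch : ∀ c v, (∃ e ∈ col c, v ∈ e) → ∃ e ∈ col (!c), v ∈ e := by
    rintro (_ | _) v
    exacts [hblue v, hred v]
  have hnext : ∀ c v, ∃ w, (∃ e ∈ col c, v ∈ e) → w ≠ v ∧ ({v, w} : Finset (Fin n)) ∈ col c := by
    intro c v
    by_cases hv : ∃ e ∈ col c, v ∈ e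
    · obtain ⟨e, he, hve⟩ := hv
      obtain ⟨a, b, hab, rfl⟩ := card_eq_two.1 (hcol c e he)
      rcases mem_insert.1 hve with rfl | hvb
      · exact ⟨b, fun _ ↦ ⟨hab.symm, he⟩⟩
      · rw [mem_singleton.1 hvb]
        exact ⟨a, fun _ ↦ ⟨hab, by rwa [pair_comm]⟩⟩
    · exact ⟨v, fun h ↦ absurd h hv⟩
  choose next hnext using hnext
  obtain ⟨e₀, he₀⟩ := hne
  obtain ⟨u, hu⟩ := card_pos.1 (by rw [h₁ e₀ he₀]; norm_num)
  let x : ℕ → Fin n := fun k ↦ Nat.rec u (fun k y ↦ next (altColour true k) y) k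
  have hx : ∀ k, ∃ e ∈ col (altColour true k), x k ∈ e := by
    intro k
    induction k with
    | zero => exact ⟨e₀, by simpa [col, altColour] using he₀, hu⟩
    | succ k ih =>
      rw [altColour_succ]
      exact hswitch _ _ ⟨_, (hnext _ _ ih).2, mem_insert_of_mem (mem_singleton_self _)⟩
  exact hasAltCycle_of_walk x fun k ↦ hnext _ _ (hx k)

lemma DisjointCovers.symm (h : DisjointCovers H₁ H₂) : DisjointCovers H₂ H₁ :=
  let ⟨C₁, C₂, hd, hc₁, hc₂⟩ := h
  ⟨C₂, C₁, hd.symm, hc₂, hc₁⟩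

lemma DisjointCovers.of_filter_notMem {v : Fin n} (hv : ∀ e ∈ H₂, v ∉ e)
    (h : DisjointCovers (H₁.filter (v ∉ ·)) H₂) : DisjointCovers H₁ H₂ := by
  obtain ⟨C₁, C₂, hd, hc₁, hc₂⟩ := h
  refine ⟨insert v C₁, C₂.erase v, ?_, fun e he ↦ ?_, fun e he ↦ ?_⟩
  · exact disjoint_insert_left.2 ⟨notMem_erase v C₂, hd.mono_right (erase_subset v C₂)⟩
  · by_cases hve : v ∈ e
    · exact ⟨v, hve, mem_insert_self v C₁⟩
    · obtain ⟨u, hu, huC⟩ := hc₁ e (mem_filter.2 ⟨he, hve⟩)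
      exact ⟨u, hu, mem_insert_of_mem huC⟩
  · obtain ⟨u, hu, huC⟩ := hc₂ e he
    exact ⟨u, hu, mem_erase.2 ⟨fun h ↦ hv e he (h ▸ hu), huC⟩⟩

theorem disjointCovers_of_not_hasAltCycle (h₁ : ∀ e ∈ H₁, #e = 2) (h₂ : ∀ e ∈ H₂, #e = 2)
    (h : ¬ HasAltCycle H₁ H₂) : DisjointCovers H₁ H₂ := by
  induction hN : #H₁ + #H₂ using Nat.strong_induction_on generalizing H₁ H₂ with
  | _ N ih =>
  by_cases hred : ∃ v, (∃ e ∈ H₁, v ∈ e) ∧ ∀ e ∈ H₂, v ∉ e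
  · obtain ⟨v, ⟨e, he, hve⟩, hv⟩ := hred
    have hlt : #(H₁.filter (v ∉ ·)) < #H₁ :=
      card_lt_card (filter_ssubset.2 ⟨e, he, not_not.2 hve⟩)
    exact (ih _ (by omega) (fun e he ↦ h₁ e (mem_filter.1 he).1) h₂
      (fun hc ↦ h (hc.mono (filter_subset _ _) subset_rfl)) rfl).of_filter_notMem hv
  by_cases hblue : ∃ v, (∃ e ∈ H₂, v ∈ e) ∧ ∀ e ∈ H₁, v ∉ e
  · obtain ⟨v, ⟨e, he, hve⟩, hv⟩ := hblue
    have hlt : #(H₂.filter (v ∉ ·)) < #H₂ :=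
      card_lt_card (filter_ssubset.2 ⟨e, he, not_not.2 hve⟩)
    exact ((ih _ (by omega) h₁ (fun e he ↦ h₂ e (mem_filter.1 he).1)
      (fun hc ↦ h (hc.mono subset_rfl (filter_subset _ _))) rfl).symm.of_filter_notMem hv).symm
  push Not at hred hblue
  rcases H₁.eq_empty_or_nonempty with rfl | hne
  · refine ⟨∅, univ, disjoint_empty_left _, by simp, fun e he ↦ ?_⟩
    obtain ⟨u, hu⟩ := card_pos.1 (by rw [h₂ e he]; norm_num)
    exact ⟨u, hu, mem_univ u⟩
  · exact absurd (hasAltCycle_of_no_monochromatic_vertex h₁ h₂ hred hblue hne) h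

end AlternatingCycles

section CycleEvents

variable {n : ℕ}

/-- `inl e` is the red and `inr e` the blue copy of the edge `e`, so that a pair `(H₁, H₂)`
becomes the single set `H₁.disjSum H₂` of coloured edges. -/
def colouredEdge {α : Type*} (c : Bool) (e : α) : α ⊕ α := if c then .inl e else .inr e

lemma colouredEdge_inj {α : Type*} {c c' : Bool} {e e' : α} :
    colouredEdge c e = colouredEdge c' e' ↔ c = c' ∧ e = e' := by
  cases c <;> cases c' <;> simp [colouredEdge]

lemma colouredEdge_mem_iff {α : Type*} {c : Bool} {e : α} {X : Finset (α ⊕ α)} :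
    colouredEdge c e ∈ X ↔ e ∈ if c then X.toLeft else X.toRight := by
  cases c <;> simp [colouredEdge]

def altCycleEdges {m : ℕ} (b : Bool) (v : Fin m → Fin n) :
    Finset (Finset (Fin n) ⊕ Finset (Fin n)) :=
  univ.image fun k : Fin m ↦
    colouredEdge (altColour b k) {v k, v ⟨(k + 1) % m, Nat.mod_lt _ k.pos⟩}

lemma add_one_mod_cases {k m : ℕ} (hk : k < m) :
    (k + 1) % m = k + 1 ∧ k + 1 < m ∨ (k + 1) % m = 0 ∧ k + 1 = m := by
  rcases (show k + 1 ≤ m from hk).lt_or_eq with h | h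
  · exact Or.inl ⟨Nat.mod_eq_of_lt h, h⟩
  · exact Or.inr ⟨by rw [h, Nat.mod_self], h⟩

/-- For `m = 2` the two edges join the same pair of vertices; only their colours tell them
apart. -/
lemma card_altCycleEdges {m : ℕ} (b : Bool) (v : Fin m ↪ Fin n) :
    #(altCycleEdges b v) = m := by
  rw [altCycleEdges, card_image_of_injective _ fun k l hkl ↦ ?_, card_univ, Fintype.card_fin]
  obtain ⟨hc, he⟩ := colouredEdge_inj.1 hkl
  set k' : Fin m := ⟨(k + 1) % m, Nat.mod_lt _ k.pos⟩
  set l' : Fin m := ⟨(l + 1) % m, Nat.mod_lt _ l.pos⟩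
  have hk₁ : v k ∈ ({v l, v l'} : Finset (Fin n)) := he ▸ mem_insert_self _ _
  have hk₂ : v k' ∈ ({v l, v l'} : Finset (Fin n)) :=
    he ▸ mem_insert_of_mem (mem_singleton_self _)
  simp only [mem_insert, mem_singleton, v.injective.eq_iff, Fin.ext_iff] at hk₁ hk₂
  have hk' : (k' : ℕ) = (k + 1) % m := rfl
  have hl' : (l' : ℕ) = (l + 1) % m := rfl
  have := add_one_mod_cases k.isLt
  have := add_one_mod_cases l.isLt
  ext
  by_contra hne
  have hkl' : (l : ℕ) = k + 1 ∨ (k : ℕ) = l + 1 := by omega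
  rcases hkl' with h | h <;> simp [h, altColour_succ] at hc

lemma altCycleEdges_subset {m : ℕ} (hm : 2 ≤ m) (b : Bool) (v : Fin m ↪ Fin n) :
    altCycleEdges b v ⊆ (allEdges n 2).disjSum (allEdges n 2) := by
  intro x hx
  obtain ⟨k, -, rfl⟩ := mem_image.1 hx
  have hne : v k ≠ v ⟨(k + 1) % m, Nat.mod_lt _ k.pos⟩ := by
    rw [Ne, v.injective.eq_iff, Fin.ext_iff]
    rcases add_one_mod_cases k.isLt with h | h <;> simp only [h.1] <;> omega
  have he : ({v k, v ⟨(k + 1) % m, Nat.mod_lt _ k.pos⟩} : Finset (Fin n)) ∈ allEdges n 2 :=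
    mem_allEdges.2 (card_pair hne)
  cases altColour b k <;> simpa [colouredEdge] using he

/-- The potential alternating cycles: length `m`, colour `b` of the first edge, vertices `v`. -/
noncomputable def altCycleIndex (n : ℕ) : Finset (Σ m : ℕ, Bool × (Fin m ↪ Fin n)) :=
  (Icc 2 n).sigma fun _ ↦ univ

lemma two_le_of_mem_altCycleIndex {i : Σ m : ℕ, Bool × (Fin m ↪ Fin n)}
    (hi : i ∈ altCycleIndex n) : 2 ≤ i.1 :=
  (mem_Icc.1 (mem_sigma.1 hi).1).1

lemma exists_altCycleEdges_subset {X : Finset (Finset (Fin n) ⊕ Finset (Fin n))}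
    (h : HasAltCycle X.toLeft X.toRight) :
    ∃ i ∈ altCycleIndex n, altCycleEdges i.2.1 i.2.2 ⊆ X := by
  obtain ⟨b, m, v, hm, hinj, hedge⟩ := h
  let w : Fin m ↪ Fin n := ⟨fun k ↦ v k, fun k l hkl ↦ Fin.ext (hinj k k.2 l l.2 hkl)⟩
  have hmn : m ≤ n := by simpa using Fintype.card_le_of_embedding w
  refine ⟨⟨m, b, w⟩, mem_sigma.2 ⟨mem_Icc.2 ⟨hm, hmn⟩, mem_univ _⟩, ?_⟩
  intro x hx
  obtain ⟨k, -, rfl⟩ := mem_image.1 hx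
  exact colouredEdge_mem_iff.2 (hedge k k.2)

lemma sum_altCycleIndex_pow_le {c : ℝ} (hc0 : 0 ≤ c) (hc1 : c < 1) :
    ∑ i ∈ altCycleIndex n, (c / n) ^ i.1 ≤ 2 / (1 - c) := by
  calc ∑ i ∈ altCycleIndex n, (c / n) ^ i.1
      = ∑ m ∈ Icc 2 n, 2 * n.descFactorial m * (c / n) ^ m := by
        simp [altCycleIndex, sum_sigma, Fintype.card_embedding_eq]
    _ ≤ ∑ m ∈ Icc 2 n, 2 * c ^ m := sum_le_sum fun m hm ↦ by
        have hn : (n : ℝ) ≠ 0 := by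
          have := (mem_Icc.1 hm).1.trans (mem_Icc.1 hm).2
          positivity
        calc 2 * (n.descFactorial m : ℝ) * (c / n) ^ m ≤ 2 * (n ^ m : ℕ) * (c / n) ^ m := by
              gcongr
              exact n.descFactorial_le_pow m
          _ = 2 * c ^ m := by rw [Nat.cast_pow, mul_assoc, ← mul_pow, mul_div_cancel₀ c hn]
    _ ≤ ∑ m ∈ Ico 0 (n + 1), 2 * c ^ m :=
        sum_le_sum_of_subset_of_nonneg (fun m hm ↦ by simp only [mem_Icc, mem_Ico] at hm ⊢; omega)
          fun _ _ _ ↦ by positivity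
    _ ≤ 2 / (1 - c) := by
        rw [← mul_sum, ← mul_one_div]
        gcongr
        simpa using geom_sum_Ico_le_of_lt_one (m := 0) (n := n + 1) hc0 hc1

end CycleEvents

lemma exp_neg_two_mul_le_one_sub {x : ℝ} (hx0 : 0 ≤ x) (hx : x ≤ 1 / 2) :
    Real.exp (-(2 * x)) ≤ 1 - x := by
  have hpos : 0 < 1 - x := by linarith
  have hinv : (1 - x)⁻¹ ≤ 1 + 2 * x := by
    rw [inv_le_iff_one_le_mul₀ hpos]
    nlinarith
  calc Real.exp (-(2 * x)) ≤ Real.exp (Real.log (1 - x)) := by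
        gcongr
        linarith [Real.one_sub_inv_le_log_of_pos hpos]
    _ = 1 - x := Real.exp_log hpos

lemma exp_neg_two_mul_sum_le_prod_one_sub {ι : Type*} {I : Finset ι} {x : ι → ℝ}
    (hx0 : ∀ i ∈ I, 0 ≤ x i) (hx : ∀ i ∈ I, x i ≤ 1 / 2) :
    Real.exp (-(2 * ∑ i ∈ I, x i)) ≤ ∏ i ∈ I, (1 - x i) := by
  rw [mul_sum, ← sum_neg_distrib, Real.exp_sum]
  exact prod_le_prod (fun i _ ↦ (Real.exp_pos _).le)
    fun i hi ↦ exp_neg_two_mul_le_one_sub (hx0 i hi) (hx i hi)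

lemma probPair_eq_binomialExpect (n k : ℕ) (p : ℝ)
    (P : Finset (Finset (Fin n)) → Finset (Finset (Fin n)) → Prop) :
    probPair n k p P = binomialExpect ((allEdges n k).disjSum (allEdges n k)) p
      (fun X ↦ if P X.toLeft X.toRight then 1 else 0) := by
  rw [binomialExpect_disjSum]
  simp only [toLeft_disjSum, toRight_disjSum, probPair, binomialExpect, binomialWeight, mul_sum]
  refine sum_congr rfl fun S _ ↦ sum_congr rfl fun T _ ↦ ?_
  split_ifs <;> ring

lemma probPair_mono {n k : ℕ} {p : ℝ} (hp0 : 0 ≤ p) (hp1 : p ≤ 1)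
    {P Q : Finset (Finset (Fin n)) → Finset (Finset (Fin n)) → Prop}
    (h : ∀ H₁ ⊆ allEdges n k, ∀ H₂ ⊆ allEdges n k, P H₁ H₂ → Q H₁ H₂) :
    probPair n k p P ≤ probPair n k p Q := by
  rw [probPair_eq_binomialExpect, probPair_eq_binomialExpect]
  refine binomialExpect_mono hp0 hp1 fun X hX ↦ ?_
  obtain ⟨hL, hR⟩ := subset_disjSum.1 hX
  split_ifs with hP hQ
  · exact le_rfl
  · exact absurd (h _ hL _ hR hP) hQ
  · exact zero_le_one
  · exact le_rfl

theorem exp_le_probPair_not_hasAltCycle {c : ℝ} (hc0 : 0 ≤ c) (hc1 : c < 1) {n : ℕ}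
    (hn : 2 ≤ n) :
    Real.exp (-4 / (1 - c)) ≤ probPair n 2 (c / n) (fun H₁ H₂ ↦ ¬ HasAltCycle H₁ H₂) := by
  have hp0 : 0 ≤ c / n := by positivity
  have hp : c / n ≤ 1 / 2 := by
    rw [div_le_iff₀ (by positivity)]
    have : (2 : ℝ) ≤ n := by exact_mod_cast hn
    linarith
  have hp1 : c / n ≤ 1 := by linarith
  rw [probPair_eq_binomialExpect]
  calc Real.exp (-4 / (1 - c))
      ≤ Real.exp (-(2 * ∑ i ∈ altCycleIndex n, (c / n) ^ i.1)) := by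
        gcongr
        have := sum_altCycleIndex_pow_le (n := n) hc0 hc1
        rw [neg_div, show (4 : ℝ) / (1 - c) = 2 * (2 / (1 - c)) by ring]
        linarith
    _ ≤ ∏ i ∈ altCycleIndex n, (1 - (c / n) ^ i.1) :=
        exp_neg_two_mul_sum_le_prod_one_sub (fun _ _ ↦ pow_nonneg hp0 _) fun i hi ↦
          (pow_le_of_le_one hp0 hp1 (by have := two_le_of_mem_altCycleIndex hi; omega)).trans hp
    _ = ∏ i ∈ altCycleIndex n, (1 - (c / n) ^ #(altCycleEdges i.2.1 i.2.2)) := by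
        simp only [card_altCycleEdges]
    _ ≤ _ := (prod_one_sub_pow_card_le_binomialExpect hp0 hp1 _ fun i hi ↦
          altCycleEdges_subset (two_le_of_mem_altCycleIndex hi) _ _).trans
        (binomialExpect_mono hp0 hp1 fun X _ ↦ ?_)
  split_ifs with hno hcyc <;> try norm_num
  obtain ⟨i, hi, hsub⟩ := exists_altCycleEdges_subset hcyc
  exact absurd hsub (hno i hi)

/-- For `0 < c < 1` and two independent random graphs `G(n, c/n)` (red and
blue), for all large `n` the probability that there is no alternating cycle is
at least `exp (−4/(1−c))`, and in particular disjoint covers exist with at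
least this (positive) probability. -/
theorem no_altCycle_positive_prob (c : ℝ) (hc0 : 0 < c) (hc1 : c < 1) :
    0 < Real.exp (-4 / (1 - c)) ∧
    ∃ n₀ : ℕ, ∀ n ≥ n₀,
      Real.exp (-4 / (1 - c)) ≤
        probPair n 2 (c / n) (fun H₁ H₂ => ¬ HasAltCycle H₁ H₂) ∧
      Real.exp (-4 / (1 - c)) ≤
        probPair n 2 (c / n) (fun H₁ H₂ => DisjointCovers H₁ H₂) := by
  refine ⟨Real.exp_pos _, 2, fun n hn ↦ ?_⟩
  have hp1 : c / n ≤ 1 := div_le_one_of_le₀ (by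
    have : (2 : ℝ) ≤ n := by exact_mod_cast hn
    linarith) (Nat.cast_nonneg n)
  have hcycle := exp_le_probPair_not_hasAltCycle hc0.le hc1 hn
  refine ⟨hcycle, hcycle.trans (probPair_mono (by positivity) hp1 fun H₁ h₁ H₂ h₂ ↦ ?_)⟩
  exact disjointCovers_of_not_hasAltCycle (fun e he ↦ mem_allEdges.1 (h₁ he))
    fun e he ↦ mem_allEdges.1 (h₂ he)
end
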